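/- arXiv:1611.05537 — 2 statements merged into one kernel-verified Lean document; each statement's English description precedes it below -/
import Mathlib

section
/- For every fixed 0 < α < 1, the limit lim_{n→∞} f(n, ⌊αn⌋)/((1−α)·n) exists and equals lim_{n→∞} f(n)/n. -/
/-- A tandem duplication: `x = a ++ b ++ c` becomes `y = a ++ b ++ b ++ c` with `b` nonempty. -/
def Dup (x y : List Bool) : Prop :=
  ∃ a b c : List Bool, b ≠ [] ∧ x = a ++ b ++ c ∧ y = a ++ (b ++ b) ++ c

/-- `DupSteps k x y` : `y` is obtained from `x` by exactly `k` tandem duplications. -/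
def DupSteps : ℕ → List Bool → List Bool → Prop
  | 0 => fun x y => x = y
  | k + 1 => fun x y => ∃ z, Dup x z ∧ DupSteps k z y

/-- A binary sequence is square-free if it contains no nonempty factor of the form `b ++ b`. -/
def SqFree (s : List Bool) : Prop :=
  ¬ ∃ a b c : List Bool, b ≠ [] ∧ s = a ++ (b ++ b) ++ c

/-- Duplication distance from `s` to its (square-free) root. -/
noncomputable def ddist (s : List Bool) : ℕ :=
  sInf {k | ∃ r : List Bool, SqFree r ∧ DupSteps k r s}

/-- `fmax n` : maximum duplication distance to the root over binary sequences of length `n`. -/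
noncomputable def fmax (n : ℕ) : ℕ :=
  sSup (ddist '' {s : List Bool | s.length = n})

/-- `fnm n m` : the smallest `k` such that every binary sequence of length `n` can be
converted, via at most `k` deduplication steps, to a sequence of length at most `m`. -/
noncomputable def fnm (n m : ℕ) : ℕ :=
  sInf {k | ∀ s : List Bool, s.length = n →
    ∃ j ≤ k, ∃ y : List Bool, y.length ≤ m ∧ DupSteps j y s}

lemma dup_length {x y : List Bool} (h : Dup x y) : x.length < y.length := by
  obtain ⟨a, b, c, hb, hx, hy⟩ := h
  subst hx; subst hy
  have hb' := List.length_pos_iff.mpr hb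
  simp only [List.length_append]
  omega

lemma dupSteps_trans : ∀ {i j : ℕ} {x y z : List Bool},
    DupSteps i x y → DupSteps j y z → DupSteps (i + j) x z := by
  intro i
  induction i with
  | zero =>
    intro j x y z h1 h2
    have h1' : x = y := h1
    rw [Nat.zero_add, h1']
    exact h2
  | succ i ih =>
    intro j x y z h1 h2
    obtain ⟨w, hw, hsteps⟩ := h1
    have e : i + 1 + j = (i + j) + 1 := by omega
    rw [e]
    exact ⟨w, hw, ih hsteps h2⟩

lemma sqFree_nil : SqFree [] := by
  rintro ⟨a, b, c, hb, he⟩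
  apply hb
  have := congrArg List.length he
  simp at this
  exact List.eq_nil_of_length_eq_zero (by omega)

lemma exists_root_aux : ∀ (n : ℕ) (s : List Bool), s.length ≤ n →
    ∃ k r, k ≤ s.length ∧ SqFree r ∧ DupSteps k r s := by
  intro n
  induction n with
  | zero =>
    intro s hs
    have : s = [] := List.eq_nil_of_length_eq_zero (by omega)
    subst this
    exact ⟨0, [], le_refl _, sqFree_nil, rfl⟩
  | succ n ih =>
    intro s hs
    by_cases h : SqFree s
    · exact ⟨0, s, Nat.zero_le _, h, rfl⟩
    · obtain ⟨a, b, c, hb, he⟩ := not_not.mp h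
      have hd : Dup (a ++ b ++ c) s := ⟨a, b, c, hb, rfl, he⟩
      have hlen : (a ++ b ++ c).length < s.length := dup_length hd
      obtain ⟨k, r, hk, hr, hsteps⟩ := ih (a ++ b ++ c) (by omega)
      refine ⟨k + 1, r, by omega, hr, ?_⟩
      exact dupSteps_trans hsteps (⟨s, hd, rfl⟩ : DupSteps 1 (a ++ b ++ c) s)

lemma exists_root (s : List Bool) : ∃ k r, k ≤ s.length ∧ SqFree r ∧ DupSteps k r s :=
  exists_root_aux s.length s le_rfl

lemma ddist_spec (s : List Bool) : ∃ r, SqFree r ∧ DupSteps (ddist s) r s := by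
  obtain ⟨k, r, _, hr, hst⟩ := exists_root s
  exact Nat.sInf_mem (⟨k, ⟨r, hr, hst⟩⟩ :
    {k | ∃ r : List Bool, SqFree r ∧ DupSteps k r s}.Nonempty)

lemma ddist_le {s : List Bool} {k : ℕ} (h : ∃ r, SqFree r ∧ DupSteps k r s) :
    ddist s ≤ k := Nat.sInf_le h

lemma ddist_le_length (s : List Bool) : ddist s ≤ s.length := by
  obtain ⟨k, r, hk, hr, hst⟩ := exists_root s
  exact le_trans (ddist_le ⟨r, hr, hst⟩) hk

lemma fmax_bddAbove (n : ℕ) : BddAbove (ddist '' {s : List Bool | s.length = n}) := by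
  refine ⟨n, ?_⟩
  rintro x ⟨s, hs, rfl⟩
  exact le_trans (ddist_le_length s) (le_of_eq hs)

lemma le_fmax {s : List Bool} {n : ℕ} (h : s.length = n) : ddist s ≤ fmax n :=
  le_csSup (fmax_bddAbove n) ⟨s, h, rfl⟩

lemma fmax_exists (n : ℕ) : ∃ s : List Bool, s.length = n ∧ ddist s = fmax n := by
  have h := Nat.sSup_mem
    (⟨ddist (List.replicate n true), ⟨List.replicate n true, by simp, rfl⟩⟩ :
      (ddist '' {s : List Bool | s.length = n}).Nonempty)
    (fmax_bddAbove n)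
  obtain ⟨s, hs, he⟩ := h
  exact ⟨s, hs, he⟩

lemma not_sqFree_of_length {r : List Bool} (h : 4 ≤ r.length) :
    ∃ a b c : List Bool, b ≠ [] ∧ r = a ++ (b ++ b) ++ c := by
  rcases r with _ | ⟨w, r⟩; · simp at h
  rcases r with _ | ⟨x, r⟩; · simp at h
  rcases r with _ | ⟨y, r⟩; · simp at h
  rcases r with _ | ⟨z, t⟩; · simp at h
  cases w <;> cases x <;> cases y <;> cases z <;>
    first
    | exact ⟨[], [false], _, by simp, rfl⟩
    | exact ⟨[], [true], _, by simp, rfl⟩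
    | exact ⟨[false], [false], _, by simp, rfl⟩
    | exact ⟨[false], [true], _, by simp, rfl⟩
    | exact ⟨[true], [false], _, by simp, rfl⟩
    | exact ⟨[true], [true], _, by simp, rfl⟩
    | exact ⟨[false, true], [false], _, by simp, rfl⟩
    | exact ⟨[true, false], [true], _, by simp, rfl⟩
    | exact ⟨[], [false, true], _, by simp, rfl⟩
    | exact ⟨[], [true, false], _, by simp, rfl⟩

lemma sqFree_length_le {r : List Bool} (h : SqFree r) : r.length ≤ 3 := by
  by_contra hc
  exact h (not_sqFree_of_length (by omega))

noncomputable def fstar (m : ℕ) : ℕ := Finset.sup (Finset.range (m + 1)) fmax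

lemma le_fstar {s : List Bool} {m : ℕ} (h : s.length ≤ m) : ddist s ≤ fstar m :=
  le_trans (le_fmax rfl) (Finset.le_sup (Finset.mem_range.mpr (by omega)))

lemma fnm_mem {n m : ℕ} (hm : 3 ≤ m) :
    ∀ s : List Bool, s.length = n →
      ∃ j ≤ fnm n m, ∃ y : List Bool, y.length ≤ m ∧ DupSteps j y s := by
  have hne : {k | ∀ s : List Bool, s.length = n →
      ∃ j ≤ k, ∃ y : List Bool, y.length ≤ m ∧ DupSteps j y s}.Nonempty := by
    refine ⟨n, fun s hs => ?_⟩
    obtain ⟨k, r, hk, hr, hst⟩ := exists_root s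
    exact ⟨k, by omega, r, le_trans (sqFree_length_le hr) hm, hst⟩
  exact Nat.sInf_mem hne

lemma fnm_le {n m k : ℕ}
    (h : ∀ s : List Bool, s.length = n →
      ∃ j ≤ k, ∃ y : List Bool, y.length ≤ m ∧ DupSteps j y s) :
    fnm n m ≤ k := Nat.sInf_le h

lemma lower_bound (n m : ℕ) (hm : 3 ≤ m) : fmax n ≤ fnm n m + fstar m := by
  obtain ⟨s, hs, hd⟩ := fmax_exists n
  rw [← hd]
  obtain ⟨j, hj, y, hy, hsteps⟩ := fnm_mem hm s hs
  obtain ⟨r, hr, hrsteps⟩ := ddist_spec y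
  have h1 : ddist s ≤ ddist y + j := ddist_le ⟨r, hr, dupSteps_trans hrsteps hsteps⟩
  have h2 : ddist y ≤ fstar m := le_fstar hy
  omega

lemma dup_lift {x y : List Bool} (a c : List Bool) (h : Dup x y) :
    Dup (a ++ x ++ c) (a ++ y ++ c) := by
  obtain ⟨a', b, c', hb, hx, hy⟩ := h
  subst hx; subst hy
  exact ⟨a ++ a', b, c' ++ c, hb, by simp, by simp⟩

lemma dupSteps_lift : ∀ {k : ℕ} {x y : List Bool} (a c : List Bool),
    DupSteps k x y → DupSteps k (a ++ x ++ c) (a ++ y ++ c) := by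
  intro k
  induction k with
  | zero =>
    intro x y a c h
    have h' : x = y := h
    rw [h']
    rfl
  | succ k ih =>
    intro x y a c h
    obtain ⟨z, hd, hs⟩ := h
    exact ⟨a ++ z ++ c, dup_lift a c hd, ih a c hs⟩

lemma one_round {l : ℕ} (s : List Bool) (h : l ≤ s.length) :
    ∃ j y, j ≤ fmax l ∧ DupSteps j y s ∧ y.length + l ≤ s.length + 3 := by
  have hb : (s.take l).length = l := by simp [h]
  obtain ⟨r, hr, hsteps⟩ := ddist_spec (s.take l)
  have hlift := dupSteps_lift [] (s.drop l) hsteps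
  simp only [List.nil_append] at hlift
  rw [List.take_append_drop] at hlift
  refine ⟨ddist (s.take l), r ++ s.drop l, le_fmax hb, hlift, ?_⟩
  have hr3 : r.length ≤ 3 := sqFree_length_le hr
  simp only [List.length_append, List.length_drop]
  omega

lemma many_rounds (l : ℕ) : ∀ (t : ℕ) (s : List Bool),
    ∃ j y, j ≤ t * fmax l ∧ DupSteps j y s ∧
      (y.length + t * l ≤ s.length + 3 * t ∨ y.length < l) := by
  intro t
  induction t with
  | zero => intro s; exact ⟨0, s, Nat.zero_le _, rfl, Or.inl (by omega)⟩
  | succ t ih =>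
    intro s
    by_cases hc : l ≤ s.length
    · obtain ⟨j₁, y₁, hj₁, hst₁, hlen₁⟩ := one_round s hc
      obtain ⟨j₂, y₂, hj₂, hst₂, hcase⟩ := ih y₁
      refine ⟨j₂ + j₁, y₂, ?_, dupSteps_trans hst₂ hst₁, ?_⟩
      · rw [Nat.succ_mul]; omega
      · rcases hcase with hcase | hcase
        · left
          rw [Nat.succ_mul]
          have e : 3 * (t + 1) = 3 * t + 3 := by ring
          rw [e]
          linarith
        · right; exact hcase
    · exact ⟨0, s, Nat.zero_le _, rfl, Or.inr (by omega)⟩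

lemma upper_bound {n m l t : ℕ} (hl : 4 ≤ l) (hlm : l ≤ m) (ht : n ≤ m + t * (l - 3)) :
    fnm n m ≤ t * fmax l := by
  apply fnm_le
  intro s hs
  obtain ⟨j, y, hj, hsteps, hcase⟩ := many_rounds l t s
  refine ⟨j, hj, y, ?_, hsteps⟩
  rcases hcase with hcase | hcase
  · have e : t * l = t * (l - 3) + 3 * t := by
      have : l - 3 + 3 = l := by omega
      calc t * l = t * (l - 3 + 3) := by rw [this]
        _ = t * (l - 3) + 3 * t := by ring
    rw [hs, e] at hcase
    omega
  · omega

set_option maxHeartbeats 1000000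

theorem partial_dedup_limit (α : ℝ) (hα0 : 0 < α) (hα1 : α < 1) (L : ℝ)
    (hL : Filter.Tendsto (fun n : ℕ => (fmax n : ℝ) / n) Filter.atTop (nhds L)) :
    Filter.Tendsto (fun n : ℕ => (fnm n ⌊α * n⌋₊ : ℝ) / ((1 - α) * n))
      Filter.atTop (nhds L) := by
  have hL0 : 0 ≤ L := by
    refine ge_of_tendsto' (f := fun n : ℕ => (fmax n : ℝ) / n) hL fun n => ?_
    exact div_nonneg (Nat.cast_nonneg _) (Nat.cast_nonneg _)
  have hβ : 0 < 1 - α := by linarith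
  rw [Metric.tendsto_atTop] at hL ⊢
  intro ε hε
  set ε₀ := ε * (1 - α) / 4 with hε₀def
  have hε₀ : 0 < ε₀ := div_pos (mul_pos hε hβ) (by norm_num)
  have hε₀le : ε₀ ≤ ε / 4 := by nlinarith
  obtain ⟨N₁, hN₁⟩ := hL (ε₀ / 2) (half_pos hε₀)
  set N₀ := max N₁ 1 with hN₀def
  have hN₀ : ∀ k, N₀ ≤ k →
      (fmax k : ℝ) < (L + ε₀ / 2) * k ∧ (L - ε₀ / 2) * k < fmax k := by
    intro k hk
    have hk1 : 1 ≤ k := le_trans (le_max_right _ _) hk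
    have hkpos : (0:ℝ) < k := by exact_mod_cast hk1
    have hd := hN₁ k (le_trans (le_max_left _ _) hk)
    rw [Real.dist_eq, abs_sub_lt_iff] at hd
    constructor
    · have h1 : (fmax k : ℝ) / k < L + ε₀ / 2 := by linarith [hd.1]
      calc (fmax k : ℝ) = (fmax k : ℝ) / k * k := by field_simp
        _ < (L + ε₀ / 2) * k := mul_lt_mul_of_pos_right h1 hkpos
    · have h1 : L - ε₀ / 2 < (fmax k : ℝ) / k := by linarith [hd.2]
      calc (L - ε₀ / 2) * k < (fmax k : ℝ) / k * k := mul_lt_mul_of_pos_right h1 hkpos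
        _ = (fmax k : ℝ) := by field_simp
  set C := (fstar N₀ : ℝ) with hCdef
  have hC0 : 0 ≤ C := by rw [hCdef]; exact Nat.cast_nonneg _
  have hCle : ∀ m : ℕ, (fstar m : ℝ) ≤ (L + ε₀) * m + C := by
    intro m
    obtain ⟨k₀, hk₀mem, hk₀eq⟩ := Finset.exists_mem_eq_sup (Finset.range (m + 1))
      (by simp) fmax
    have hk₀m : k₀ ≤ m := by
      have := Finset.mem_range.mp hk₀mem; omega
    have hk₀mR : (k₀ : ℝ) ≤ m := by exact_mod_cast hk₀m
    have hmul : (0:ℝ) ≤ (L + ε₀) * m := mul_nonneg (by linarith) (Nat.cast_nonneg _)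
    rw [show fstar m = Finset.sup (Finset.range (m + 1)) fmax from rfl, hk₀eq]
    by_cases hcase : N₀ ≤ k₀
    · have h1 := (hN₀ k₀ hcase).1
      have h2 : (L + ε₀ / 2) * k₀ ≤ (L + ε₀) * m := by nlinarith [Nat.cast_nonneg (α := ℝ) k₀]
      linarith
    · have h3 : fmax k₀ ≤ fstar N₀ := Finset.le_sup (Finset.mem_range.mpr (by omega))
      have h3R : (fmax k₀ : ℝ) ≤ C := by rw [hCdef]; exact_mod_cast h3
      linarith
  -- choose block length
  set l := max (max N₀ 4) (⌈6 * (L + ε₀) / ε₀⌉₊ + 3) with hldef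
  have hl4 : 4 ≤ l := le_trans (le_max_right N₀ 4) (le_max_left _ _)
  obtain ⟨d, hdl⟩ : ∃ d, l = d + 3 := ⟨l - 3, by omega⟩
  have hd1 : 1 ≤ d := by omega
  have hdR : (0:ℝ) < d := by exact_mod_cast hd1
  have hdreal : 6 * (L + ε₀) ≤ ε₀ * d := by
    have h1 : ⌈6 * (L + ε₀) / ε₀⌉₊ ≤ d := by omega
    have h1R : (⌈6 * (L + ε₀) / ε₀⌉₊ : ℝ) ≤ d := by exact_mod_cast h1
    have h2 := Nat.le_ceil (6 * (L + ε₀) / ε₀)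
    have h3 : 6 * (L + ε₀) / ε₀ ≤ d := le_trans h2 h1R
    rw [div_le_iff₀ hε₀] at h3
    linarith
  have hlN₀ : N₀ ≤ l := le_trans (le_max_left N₀ 4) (le_max_left _ _)
  have hfl : (fmax l : ℝ) ≤ (L + ε₀) * d := by
    have h1 := (hN₀ l hlN₀).1
    have hcast : (l : ℝ) = (d : ℝ) + 3 := by rw [hdl]; push_cast; ring
    rw [hcast] at h1
    nlinarith
  -- eventual facts
  have htn : Filter.Tendsto (fun n : ℕ => (n : ℝ)) Filter.atTop Filter.atTop :=
    tendsto_natCast_atTop_atTop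
  have htαn : Filter.Tendsto (fun n : ℕ => α * (n : ℝ)) Filter.atTop Filter.atTop :=
    htn.const_mul_atTop hα0
  have htβ : Filter.Tendsto (fun n : ℕ => (1 - α) * (n : ℝ)) Filter.atTop Filter.atTop :=
    htn.const_mul_atTop hβ
  have htε : Filter.Tendsto (fun n : ℕ => ε / 4 * ((1 - α) * (n : ℝ)))
      Filter.atTop Filter.atTop := htβ.const_mul_atTop (by linarith)
  have hev1 : ∀ᶠ n : ℕ in Filter.atTop, (l : ℝ) ≤ α * n := htαn.eventually_ge_atTop _
  have hev2 : ∀ᶠ n : ℕ in Filter.atTop,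
      (L + ε₀) * ((d : ℝ) + 1) < ε / 4 * ((1 - α) * n) := htε.eventually_gt_atTop _
  have hev3 : ∀ᶠ n : ℕ in Filter.atTop, C < ε / 4 * ((1 - α) * n) := htε.eventually_gt_atTop _
  have hev4 : ∀ᶠ n : ℕ in Filter.atTop, N₀ ≤ n := Filter.eventually_ge_atTop N₀
  obtain ⟨N, hN⟩ := Filter.eventually_atTop.mp (hev1.and (hev2.and (hev3.and hev4)))
  refine ⟨N, fun n hn => ?_⟩
  obtain ⟨h1, h2, h3, h4⟩ := hN n hn
  set m := ⌊α * (n : ℝ)⌋₊ with hmdef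
  have hn1 : 1 ≤ n := le_trans (le_max_right N₁ 1) h4
  have hnR : (1:ℝ) ≤ n := by exact_mod_cast hn1
  have hnpos : (0:ℝ) < n := by linarith
  have hβn : 0 < (1 - α) * (n : ℝ) := mul_pos hβ hnpos
  have hm_le : (m : ℝ) ≤ α * n := Nat.floor_le (mul_nonneg hα0.le (Nat.cast_nonneg _))
  have hm_gt : α * (n : ℝ) < m + 1 := Nat.lt_floor_add_one _
  have hlm : l ≤ m := Nat.le_floor h1
  have hmn : m ≤ n := by
    have hx : (m : ℝ) < n := by nlinarith
    exact_mod_cast hx.le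
  have hm3 : 3 ≤ m := by omega
  -- upper bound
  set t := (n - m) / d + 1 with htdef
  have key : fnm n m ≤ t * fmax l := by
    apply upper_bound hl4 hlm
    have hd3 : l - 3 = d := by omega
    rw [hd3]
    have h5 := Nat.div_add_mod (n - m) d
    have h6 : (n - m) % d < d := Nat.mod_lt _ (by omega)
    have h7 : t * d = d * ((n - m) / d) + d := by rw [htdef]; ring
    calc n = m + (n - m) := by omega
      _ = m + (d * ((n - m) / d) + (n - m) % d) := by rw [h5]
      _ ≤ m + (d * ((n - m) / d) + d) := Nat.add_le_add_left (Nat.add_le_add_left h6.le _) m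
      _ = m + t * d := by rw [h7]
  have hfnm_le : (fnm n m : ℝ) ≤ (L + ε / 2) * ((1 - α) * n) := by
    have k1 : (fnm n m : ℝ) ≤ (t : ℝ) * (fmax l : ℝ) := by exact_mod_cast key
    have k2 : (t : ℝ) ≤ ((n : ℝ) - m) / d + 1 := by
      rw [htdef]
      push_cast
      have hcd := Nat.cast_div_le (α := ℝ) (m := n - m) (n := d)
      rw [Nat.cast_sub hmn] at hcd
      linarith
    have k4 : (fnm n m : ℝ) ≤ (((n : ℝ) - m) / d + 1) * ((L + ε₀) * d) := by
      refine le_trans k1 (mul_le_mul k2 hfl (Nat.cast_nonneg _) ?_)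
      have hnm : (0:ℝ) ≤ (n : ℝ) - m := by
        have : (m:ℝ) ≤ n := by exact_mod_cast hmn
        linarith
      have := div_nonneg hnm hdR.le
      linarith
    have e : (((n : ℝ) - m) / d + 1) * ((L + ε₀) * d)
        = (L + ε₀) * ((n : ℝ) - m) + (L + ε₀) * d := by
      field_simp
    rw [e] at k4
    have k6 : (n : ℝ) - m ≤ (1 - α) * n + 1 := by linarith
    have k7 : (L + ε₀) * ((n : ℝ) - m) ≤ (L + ε₀) * ((1 - α) * n + 1) :=
      mul_le_mul_of_nonneg_left k6 (add_nonneg hL0 hε₀.le)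
    have k8 : ε₀ * ((1 - α) * (n : ℝ)) ≤ ε / 4 * ((1 - α) * n) :=
      mul_le_mul_of_nonneg_right hε₀le hβn.le
    linarith [k4, k7, h2, k8]
  -- lower bound
  have hlow := lower_bound n m hm3
  have l1 : (fmax n : ℝ) ≤ (fnm n m : ℝ) + (fstar m : ℝ) := by exact_mod_cast hlow
  have l2 : (L - ε₀) * n ≤ (fmax n : ℝ) := by
    have hx := (hN₀ n h4).2
    have hy : (L - ε₀) * (n : ℝ) ≤ (L - ε₀ / 2) * n :=
      mul_le_mul_of_nonneg_right (by linarith) (Nat.cast_nonneg _)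
    linarith
  have l3 : (fstar m : ℝ) ≤ (L + ε₀) * (α * n) + C := by
    have hy : (L + ε₀) * (m : ℝ) ≤ (L + ε₀) * (α * n) :=
      mul_le_mul_of_nonneg_left hm_le (add_nonneg hL0 hε₀.le)
    linarith [hCle m]
  have l5 : ε₀ * ((1 + α) * (n : ℝ)) ≤ ε / 2 * ((1 - α) * n) := by
    have e : ε₀ * ((1 + α) * (n : ℝ)) = (ε / 4 * ((1 - α) * n)) * (1 + α) := by
      rw [hε₀def]; ring
    have hp : (0:ℝ) ≤ ε / 4 * ((1 - α) * (n : ℝ)) := mul_nonneg (by linarith) (mul_nonneg hβ.le (Nat.cast_nonneg _))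
    have h2α : (1 + α) ≤ 2 := by linarith
    calc ε₀ * ((1 + α) * (n : ℝ)) = (ε / 4 * ((1 - α) * n)) * (1 + α) := e
      _ ≤ (ε / 4 * ((1 - α) * n)) * 2 := mul_le_mul_of_nonneg_left h2α hp
      _ = ε / 2 * ((1 - α) * n) := by ring
  have l4 : (L - 3 * ε / 4) * ((1 - α) * n) ≤ (fnm n m : ℝ) := by
    nlinarith [l1, l2, l3, h3, l5]
  -- conclude
  rw [Real.dist_eq, abs_sub_lt_iff]
  constructor
  · have hub : (fnm n m : ℝ) / ((1 - α) * n) ≤ L + ε / 2 := by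
      rw [div_le_iff₀ hβn]; linarith
    linarith
  · have hlb : L - 3 * ε / 4 ≤ (fnm n m : ℝ) / ((1 - α) * n) := by
      rw [le_div_iff₀ hβn]; linarith
    linarith
end

section
/- For every binary sequence s of length n, the parallel duplication distance to the root satisfies f'(s) ≥ log₂ n − 2; moreover f'(n) < 2·log₂ n for all n ≥ 2, where f'(n) is the maximum of f'(s) over binary sequences s of length n. -/
/-- One parallel deduplication step: simultaneously deduplicate a set of pairwise
non-overlapping repeats (listed left to right). -/
inductive ParDedup : List Bool → List Bool → Prop
  | single (a b c : List Bool) (hb : b ≠ []) : ParDedup (a ++ (b ++ b) ++ c) (a ++ b ++ c)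
  | cons (a b : List Bool) (hb : b ≠ []) {x y : List Bool} (h : ParDedup x y) :
      ParDedup (a ++ (b ++ b) ++ x) (a ++ b ++ y)

/-- `ParSteps k x y` : `y` is obtained from `x` by exactly `k` parallel deduplication steps. -/
def ParSteps : ℕ → List Bool → List Bool → Prop
  | 0 => fun x y => x = y
  | k + 1 => fun x y => ∃ z, ParDedup x z ∧ ParSteps k z y

/-- Parallel duplication distance of `s` to its square-free root. -/
noncomputable def pdist (s : List Bool) : ℕ :=
  sInf {k | ∃ r : List Bool, SqFree r ∧ ParSteps k s r}

/-- Maximum parallel duplication distance over binary sequences of length `n`. -/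
noncomputable def pfmax (n : ℕ) : ℕ :=
  sSup (pdist '' {s : List Bool | s.length = n})

namespace ParDedup

lemma append_left {x y : List Bool} (p : List Bool) (h : ParDedup x y) :
    ParDedup (p ++ x) (p ++ y) := by
  cases h with
  | single a b c hb => simpa using ParDedup.single (p ++ a) b c hb
  | cons a b hb h => simpa using ParDedup.cons (p ++ a) b hb h

lemma length_le {x y : List Bool} (h : ParDedup x y) : x.length ≤ 2 * y.length := by
  induction h with
  | single a b c => simp only [List.length_append]; omega
  | cons a b _ _ ih => simp only [List.length_append]; omega

end ParDedup

namespace ParSteps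

lemma trans {k l : ℕ} {x y z : List Bool} (hxy : ParSteps k x y) (hyz : ParSteps l y z) :
    ParSteps (k + l) x z := by
  induction k generalizing x with
  | zero => rw [zero_add]; exact (hxy : x = y) ▸ hyz
  | succ k ih =>
    obtain ⟨w, hxw, hwy⟩ := hxy
    rw [Nat.add_right_comm]
    exact ⟨w, hxw, ih hwy⟩

lemma length_le {k : ℕ} {x y : List Bool} (h : ParSteps k x y) :
    x.length ≤ 2 ^ k * y.length := by
  induction k generalizing x with
  | zero => rw [show x = y from h]; simp
  | succ k ih =>
    obtain ⟨z, hxz, hzy⟩ := h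
    calc x.length ≤ 2 * z.length := hxz.length_le
      _ ≤ 2 * (2 ^ k * y.length) := Nat.mul_le_mul_left 2 (ih hzy)
      _ = 2 ^ (k + 1) * y.length := by ring

end ParSteps

lemma SqFree.length_le_three {s : List Bool} (h : SqFree s) : s.length ≤ 3 := by
  match s, h with
  | [], _ | [_], _ | [_, _], _ | [_, _, _], _ => simp
  | p :: q :: u :: v :: rest, h =>
    refine absurd ?_ h
    by_cases hpq : p = q
    · exact ⟨[], [p], u :: v :: rest, by simp, by simp [hpq]⟩
    by_cases hqu : q = u
    · exact ⟨[p], [q], v :: rest, by simp, by simp [hqu]⟩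
    by_cases huv : u = v
    · exact ⟨[p, q], [u], rest, by simp, by simp [huv]⟩
    -- over a two-letter alphabet, `p ≠ q ≠ u ≠ v` forces `u = p` and `v = q`
    have hup : u = p := by revert hpq hqu; cases p <;> cases q <;> cases u <;> simp
    have hvq : v = q := by revert hqu huv; cases q <;> cases u <;> cases v <;> simp
    exact ⟨[], [p, q], rest, by simp, by simp [hup, hvq]⟩

lemma sqFree_of_isChain_ne {s : List Bool} (hs : s.IsChain (· ≠ ·)) (hl : s.length ≤ 3) :
    SqFree s := by
  rintro ⟨a, b, c, hb, rfl⟩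
  obtain ⟨x, rfl⟩ : ∃ x, b = [x] := by
    match b, hb, hl with
    | [x], _, _ => exact ⟨x, rfl⟩
    | _ :: _ :: _, _, hl => simp at hl; omega
  have := hs.infix (l₁ := [x, x]) ⟨a, c, by simp⟩
  simp at this

-- A block `(u, k)` stands for `u` repeated `k + 1` times; one parallel step halves every excess `k`.
def expandBlocks (e : List (List Bool × ℕ)) : List Bool :=
  e.flatMap fun p => (List.replicate (p.2 + 1) p.1).flatten

def halveBlocks (e : List (List Bool × ℕ)) : List (List Bool × ℕ) :=
  e.map fun p => (p.1, p.2 / 2)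

def maxExcess (e : List (List Bool × ℕ)) : ℕ :=
  e.foldr (fun p m => max p.2 m) 0

@[simp] lemma expandBlocks_nil : expandBlocks [] = [] := rfl

@[simp] lemma expandBlocks_cons (u : List Bool) (k : ℕ) (e : List (List Bool × ℕ)) :
    expandBlocks ((u, k) :: e) = (List.replicate (k + 1) u).flatten ++ expandBlocks e := by
  simp [expandBlocks]

@[simp] lemma halveBlocks_nil : halveBlocks [] = [] := rfl

@[simp] lemma halveBlocks_cons (u : List Bool) (k : ℕ) (e : List (List Bool × ℕ)) :
    halveBlocks ((u, k) :: e) = (u, k / 2) :: halveBlocks e := rfl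

@[simp] lemma maxExcess_nil : maxExcess [] = 0 := rfl

@[simp] lemma maxExcess_cons (u : List Bool) (k : ℕ) (e : List (List Bool × ℕ)) :
    maxExcess ((u, k) :: e) = max k (maxExcess e) := rfl

@[simp] lemma map_fst_halveBlocks (e : List (List Bool × ℕ)) :
    (halveBlocks e).map Prod.fst = e.map Prod.fst := by
  simp [halveBlocks, Function.comp_def]

lemma maxExcess_halveBlocks (e : List (List Bool × ℕ)) :
    maxExcess (halveBlocks e) = maxExcess e / 2 := by
  induction e with
  | nil => rfl
  | cons p e ih =>
    obtain ⟨u, k⟩ := p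
    simp only [halveBlocks_cons, maxExcess_cons, ih]
    omega

lemma halveBlocks_eq_self {e : List (List Bool × ℕ)} (h : maxExcess e = 0) : halveBlocks e = e := by
  induction e with
  | nil => rfl
  | cons p e ih =>
    obtain ⟨u, k⟩ := p
    simp only [maxExcess_cons, Nat.max_eq_zero_iff] at h
    simp [halveBlocks_cons, h.1, ih h.2]

lemma expandBlocks_eq_flatten {e : List (List Bool × ℕ)} (h : maxExcess e = 0) :
    expandBlocks e = (e.map Prod.fst).flatten := by
  induction e with
  | nil => rfl
  | cons p e ih =>
    obtain ⟨u, k⟩ := p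
    simp only [maxExcess_cons, Nat.max_eq_zero_iff] at h
    simp [h.1, ih h.2]

lemma maxExcess_add_length_le {e : List (List Bool × ℕ)} (he : ∀ p ∈ e, p.1 ≠ []) :
    maxExcess e + e.length ≤ (expandBlocks e).length := by
  induction e with
  | nil => rfl
  | cons p e ih =>
    obtain ⟨u, k⟩ := p
    have hu : 1 ≤ u.length := List.length_pos_iff.mpr (he _ List.mem_cons_self)
    have ih := ih fun p hp => he p (List.mem_cons_of_mem _ hp)
    have : k + 1 ≤ (k + 1) * u.length := Nat.le_mul_of_pos_right _ hu
    simp only [maxExcess_cons, List.length_cons, expandBlocks_cons, List.length_append,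
      List.length_flatten, List.map_replicate, List.sum_replicate, smul_eq_mul] at ih ⊢
    omega

lemma exists_flatten_replicate_eq_square (u : List Bool) (hu : u ≠ []) {k : ℕ} (hk : 0 < k) :
    ∃ a b : List Bool, b ≠ [] ∧ (List.replicate (k + 1) u).flatten = a ++ (b ++ b) ∧
      (List.replicate (k / 2 + 1) u).flatten = a ++ b := by
  refine ⟨(List.replicate ((k + 1) % 2) u).flatten, (List.replicate ((k + 1) / 2) u).flatten,
    by simp [hu]; omega, ?_, ?_⟩ <;>
  simp only [← List.flatten_append, ← List.replicate_add] <;> congr 2 <;> omega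

lemma parDedup_halveBlocks {e : List (List Bool × ℕ)} (he : ∀ p ∈ e, p.1 ≠ [])
    (h : 0 < maxExcess e) : ParDedup (expandBlocks e) (expandBlocks (halveBlocks e)) := by
  induction e with
  | nil => simp at h
  | cons p e ih =>
    obtain ⟨u, k⟩ := p
    have ih := fun h => ih (fun p hp => he p (List.mem_cons_of_mem _ hp)) h
    simp only [maxExcess_cons, expandBlocks_cons, halveBlocks_cons] at h ⊢
    rcases Nat.eq_zero_or_pos k with rfl | hk
    · simpa using (ih (by simpa using h)).append_left u
    obtain ⟨a, b, hb, hsq, hhalf⟩ := exists_flatten_replicate_eq_square u (he _ List.mem_cons_self) hk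
    rw [hsq, hhalf]
    rcases Nat.eq_zero_or_pos (maxExcess e) with he0 | he0
    · rw [halveBlocks_eq_self he0]
      exact .single a b _ hb
    · exact .cons a b hb (ih he0)

theorem exists_parSteps_expandBlocks {e : List (List Bool × ℕ)} (he : ∀ p ∈ e, p.1 ≠ []) :
    ∃ t, ParSteps t (expandBlocks e) (e.map Prod.fst).flatten ∧
      2 ^ t ≤ max 1 (2 * maxExcess e) := by
  induction hK : maxExcess e using Nat.strong_induction_on generalizing e with
  | _ K ih =>
    rcases Nat.eq_zero_or_pos K with rfl | hK0
    · exact ⟨0, expandBlocks_eq_flatten hK, by simp⟩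
    have he' : ∀ p ∈ halveBlocks e, p.1 ≠ [] := fun p hp => by
      obtain ⟨q, hq, rfl⟩ := List.mem_map.mp hp
      exact he q hq
    obtain ⟨t, hsteps, hbound⟩ := ih (K / 2) (by omega) he' (by rw [maxExcess_halveBlocks, hK])
    refine ⟨t + 1, ⟨_, parDedup_halveBlocks he (hK ▸ hK0), by simpa using hsteps⟩, ?_⟩
    rw [pow_succ]
    omega

def altWord : Bool → ℕ → List Bool
  | _, 0 => []
  | b, m + 1 => b :: altWord (!b) m

@[simp] lemma altWord_zero (b : Bool) : altWord b 0 = [] := rfl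

@[simp] lemma altWord_succ (b : Bool) (m : ℕ) : altWord b (m + 1) = b :: altWord (!b) m := rfl

@[simp] lemma length_altWord (b : Bool) (m : ℕ) : (altWord b m).length = m := by
  induction m generalizing b with
  | zero => rfl
  | succ m ih => simp [ih]

lemma isChain_altWord (b : Bool) (m : ℕ) : (altWord b m).IsChain (· ≠ ·) := by
  induction m generalizing b with
  | zero => simp
  | succ m ih =>
    cases m with
    | zero => simp
    | succ m => simpa using ih (!b)

lemma altWord_two_mul_add (b : Bool) (j r : ℕ) :
    altWord b (2 * j + r) = (List.replicate j [b, !b]).flatten ++ altWord b r := by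
  induction j with
  | zero => simp
  | succ j ih => rw [show 2 * (j + 1) + r = 2 * j + r + 2 by ring]; simp [ih, List.replicate_succ]

lemma exists_runBlocks (s : List Bool) :
    ∃ b e, expandBlocks e = s ∧ e.map Prod.fst = (altWord b e.length).map ([·]) := by
  induction s with
  | nil => exact ⟨true, [], rfl, rfl⟩
  | cons a s ih =>
    obtain ⟨b, e, rfl, he⟩ := ih
    match e, he with
    | [], _ => exact ⟨a, [([a], 0)], rfl, rfl⟩
    | (u, k) :: e, he =>
      simp only [List.map_cons, List.length_cons, altWord_succ, List.cons.injEq] at he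
      obtain ⟨rfl, he⟩ := he
      by_cases hab : a = b
      · subst hab
        refine ⟨a, ([a], k + 1) :: e, ?_, by simpa using he⟩
        simp [List.replicate_succ]
      · refine ⟨a, ([a], 0) :: ([b], k) :: e, rfl, ?_⟩
        obtain rfl : b = !a := by revert hab; cases a <;> cases b <;> simp
        simpa using he

theorem exists_parSteps_altWord (b : Bool) (m : ℕ) :
    ∃ t r, r ≤ 3 ∧ ParSteps t (altWord b m) (altWord b r) ∧ 2 ^ t ≤ max 1 (m - 2) := by
  rcases Nat.lt_or_ge m 2 with hm | hm
  · exact ⟨0, m, by omega, rfl, by simp⟩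
  -- an alternating word is a power of `[b, !b]`, possibly followed by one more letter
  set e : List (List Bool × ℕ) := ([b, !b], m / 2 - 1) :: (altWord b (m % 2)).map fun x => ([x], 0)
  have hwords : ∀ p ∈ e, p.1 ≠ [] := by
    intro p hp
    simp only [e, List.mem_cons, List.mem_map] at hp
    rcases hp with rfl | ⟨x, -, rfl⟩ <;> simp
  have htail : maxExcess ((altWord b (m % 2)).map fun x => ([x], 0)) = 0 := by
    induction altWord b (m % 2) <;> simp_all
  obtain ⟨t, hsteps, hbound⟩ := exists_parSteps_expandBlocks hwords
  refine ⟨t, m % 2 + 2, by omega, ?_, ?_⟩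
  · convert hsteps using 1
    · rw [← Nat.div_add_mod m 2, altWord_two_mul_add]
      simp [e, expandBlocks_eq_flatten htail, Function.comp_def, ← List.flatMap_def,
        show m / 2 - 1 + 1 = m / 2 by omega]
    · simp [e, Function.comp_def, ← List.flatMap_def]
  · simp only [e, maxExcess_cons, htail] at hbound
    omega

lemma max_one_mul_max_one_lt_sq {K R n : ℕ} (hKR : K + R ≤ n) (hR : 1 ≤ R) (hn : 2 ≤ n) :
    max 1 (2 * K) * max 1 (R - 2) < n ^ 2 := by
  have hn2 : 2 * n ≤ n ^ 2 := by nlinarith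
  rcases Nat.eq_zero_or_pos K with rfl | hK
  · simp only [mul_zero, zero_le_one, max_eq_left, one_mul]
    omega
  rcases Nat.lt_or_ge R 3 with hR3 | hR3
  · rw [max_eq_left (by omega : R - 2 ≤ 1)]
    omega
  rw [max_eq_right (by omega : 1 ≤ 2 * K), max_eq_right (by omega : 1 ≤ R - 2)]
  obtain ⟨c, rfl⟩ : ∃ c, R = c + 3 := ⟨R - 3, by omega⟩
  rw [show c + 3 - 2 = c + 1 by omega]
  nlinarith

theorem exists_parSteps_sqFree (s : List Bool) (hs : 2 ≤ s.length) :
    ∃ t r, SqFree r ∧ ParSteps t s r ∧ 2 ^ t < s.length ^ 2 := by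
  obtain ⟨b, e, rfl, hfst⟩ := exists_runBlocks s
  have hwords : ∀ p ∈ e, p.1 ≠ [] := fun p hp => by
    have := List.mem_map_of_mem (f := Prod.fst) hp
    rw [hfst] at this
    obtain ⟨x, -, hx⟩ := List.mem_map.mp this
    simp [← hx]
  obtain ⟨t₁, hsteps₁, hbound₁⟩ := exists_parSteps_expandBlocks hwords
  rw [hfst, ← List.flatMap_def, List.flatMap_singleton'] at hsteps₁
  obtain ⟨t₂, r, hr, hsteps₂, hbound₂⟩ := exists_parSteps_altWord b e.length
  have hR : 1 ≤ e.length := List.length_pos_iff.mpr (by rintro rfl; simp at hs)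
  refine ⟨t₁ + t₂, altWord b r, sqFree_of_isChain_ne (isChain_altWord b r) (by simpa),
    hsteps₁.trans hsteps₂, ?_⟩
  calc 2 ^ (t₁ + t₂) = 2 ^ t₁ * 2 ^ t₂ := pow_add 2 t₁ t₂
    _ ≤ max 1 (2 * maxExcess e) * max 1 (e.length - 2) := Nat.mul_le_mul hbound₁ hbound₂
    _ < (expandBlocks e).length ^ 2 :=
      max_one_mul_max_one_lt_sq (maxExcess_add_length_le hwords) hR hs

lemma exists_parSteps_pdist (s : List Bool) : ∃ r, SqFree r ∧ ParSteps (pdist s) s r := by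
  refine Nat.sInf_mem (s := {k | ∃ r, SqFree r ∧ ParSteps k s r}) ?_
  rcases Nat.lt_or_ge s.length 2 with hs | hs
  · refine ⟨0, s, sqFree_of_isChain_ne ?_ (by omega), rfl⟩
    match s, hs with
    | [], _ | [_], _ => simp
  · obtain ⟨t, r, hr, hsteps, -⟩ := exists_parSteps_sqFree s hs
    exact ⟨t, r, hr, hsteps⟩

lemma length_le_two_pow_pdist (s : List Bool) : s.length ≤ 2 ^ (pdist s + 2) := by
  obtain ⟨r, hr, hsteps⟩ := exists_parSteps_pdist s
  calc s.length ≤ 2 ^ pdist s * r.length := hsteps.length_le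
    _ ≤ 2 ^ pdist s * 4 := Nat.mul_le_mul_left _ (by linarith [hr.length_le_three])
    _ = 2 ^ (pdist s + 2) := by ring

lemma two_pow_pdist_lt (s : List Bool) (hs : 2 ≤ s.length) : 2 ^ pdist s < s.length ^ 2 := by
  obtain ⟨t, r, hr, hsteps, hbound⟩ := exists_parSteps_sqFree s hs
  have : pdist s ≤ t := Nat.sInf_le ⟨r, hr, hsteps⟩
  exact (Nat.pow_le_pow_right two_pos this).trans_lt hbound

theorem parallel_duplication_bounds :
    (∀ s : List Bool, s ≠ [] → Real.logb 2 (s.length) - 2 ≤ pdist s) ∧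
    (∀ n : ℕ, 2 ≤ n → (pfmax n : ℝ) < 2 * Real.logb 2 n) := by
  constructor
  · intro s hs
    have hpos : (0 : ℝ) < s.length := by exact_mod_cast List.length_pos_iff.mpr hs
    have := (Real.logb_le_iff_le_rpow one_lt_two hpos).mpr
      (by exact_mod_cast length_le_two_pow_pdist s : (s.length : ℝ) ≤ 2 ^ ((pdist s + 2 : ℕ) : ℝ))
    push_cast at this
    linarith
  · intro n hn
    obtain ⟨s, rfl, hs⟩ : pfmax n ∈ pdist '' {s : List Bool | s.length = n} :=
      Nat.sSup_mem ⟨_, List.replicate n true, List.length_replicate, rfl⟩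
        ((List.finite_length_eq Bool n).image pdist).bddAbove
    have := (Real.lt_logb_iff_rpow_lt one_lt_two (by positivity : (0 : ℝ) < (s.length : ℝ) ^ 2)).mpr
      (by rw [Real.rpow_natCast]; exact_mod_cast two_pow_pdist_lt s hn)
    rw [Real.logb_pow, Nat.cast_two] at this
    exact hs ▸ this
end
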